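/- arXiv:1802.01226 — 2 statements merged into one kernel-verified Lean document; each statement's English description precedes it below -/
import Mathlib

section
/- Completeness characterization of algebraic invariants (DRI): Let f be a polynomial vector field on ℝⁿ, let Q ⊆ ℝⁿ be open, let p be a polynomial, and let N ≥ 1 and polynomials g₀,…,g_{N−1} satisfy the polynomial identity L_f^N(p) = Σ_{i<N} gᵢ·L_f^i(p). Then for every ω ∈ ℝⁿ the following are equivalent: (a) for every T ≥ 0, every solution φ : [0,T] → ℝⁿ of x' = f(x) with φ(0) = ω and φ(t) ∈ Q for all t ∈ [0,T] satisfies p(φ(t)) = 0 for all t ∈ [0,T]; (b) if ω ∈ Q then L_f^i(p)(ω) = 0 for every i < N. -/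
/-!
For (a) ⇒ (b): a solution through `ω ∈ Q` exists and stays in the open set `Q` for a short
positive time. Along any solution `d/dt p(φ t) = (L_f p)(φ t)`, so if `p` vanishes along it on a
nondegenerate interval then so do all its Lie derivatives, in particular at `t = 0`.

For (b) ⇒ (a): by the rank identity, `y t := (L_f^i p (φ t))_{i<N}` solves a linear ODE
`y' = A(t) y` whose coefficients are polynomials evaluated along `φ`, hence bounded on the
compact `[0, T]`. Since `y 0 = 0`, Grönwall's inequality forces `y = 0` on `[0, T]`.
-/

open MvPolynomial Set

/-- Lie derivative of polynomial `p` along the polynomial vector field `f`. -/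
noncomputable def lieD {n : ℕ} (f : Fin n → MvPolynomial (Fin n) ℝ)
    (p : MvPolynomial (Fin n) ℝ) : MvPolynomial (Fin n) ℝ :=
  ∑ i, pderiv i p * f i

/-- `φ` is a solution of `x' = f(x)` on `[0,T]`. -/
def IsSol {n : ℕ} (f : Fin n → MvPolynomial (Fin n) ℝ) (T : ℝ)
    (φ : ℝ → (Fin n → ℝ)) : Prop :=
  ∀ t ∈ Icc (0 : ℝ) T, HasDerivWithinAt φ (fun i => eval (φ t) (f i)) (Icc (0 : ℝ) T) t

theorem HasDerivWithinAt.eval_mvPolynomial {σ : Type*} [Fintype σ] {φ : ℝ → σ → ℝ}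
    {v : σ → ℝ} {s : Set ℝ} {t : ℝ} (hφ : HasDerivWithinAt φ v s t) (q : MvPolynomial σ ℝ) :
    HasDerivWithinAt (fun u => eval (φ u) q) (∑ i, eval (φ t) (pderiv i q) * v i) s t := by
  induction q using MvPolynomial.induction_on with
  | C a => simpa using hasDerivWithinAt_const t s a
  | add p q hp hq => simpa [add_mul, Finset.sum_add_distrib, Pi.add_def] using hp.add hq
  | mul_X p i hp =>
    classical
    simp only [map_mul, eval_X]
    refine (hp.mul (hasDerivWithinAt_pi.1 hφ i)).congr_deriv ?_
    simp only [Derivation.leibniz, pderiv_X, Pi.single_apply, smul_eq_mul, mul_ite, mul_one,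
      mul_zero, map_add, map_mul, apply_ite (eval (φ t)), map_zero, add_mul, ite_mul, zero_mul,
      Finset.sum_add_distrib, Finset.sum_ite_eq, Finset.mem_univ, if_true, Finset.sum_mul, eval_X]
    rw [add_comm]
    exact congrArg₂ _ rfl (Finset.sum_congr rfl fun _ _ => by ring)

theorem norm_sum_mul_le {ι : Type*} [Fintype ι] (a : ι → ι → ℝ) (y : ι → ℝ) :
    ‖fun i => ∑ j, a i j * y j‖ ≤ (∑ i, ∑ j, |a i j|) * ‖y‖ := by
  refine (pi_norm_le_iff_of_nonneg (by positivity)).2 fun i => ?_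
  calc ‖∑ j, a i j * y j‖ ≤ ∑ j, |a i j| * ‖y‖ := by
        refine (norm_sum_le _ _).trans (Finset.sum_le_sum fun j _ => ?_)
        rw [norm_mul, Real.norm_eq_abs]
        exact mul_le_mul_of_nonneg_left (norm_le_pi_norm y j) (abs_nonneg _)
    _ = (∑ j, |a i j|) * ‖y‖ := (Finset.sum_mul _ _ _).symm
    _ ≤ (∑ i, ∑ j, |a i j|) * ‖y‖ := by
        refine mul_le_mul_of_nonneg_right ?_ (norm_nonneg y)
        exact Finset.single_le_sum (f := fun i => ∑ j, |a i j|)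
          (fun i _ => by positivity) (Finset.mem_univ i)

theorem MvPolynomial.contDiff_eval {σ : Type*} [Fintype σ] (q : MvPolynomial σ ℝ)
    {k : WithTop ℕ∞} : ContDiff ℝ k fun x => eval x q :=
  (AnalyticOnNhd.eval_mvPolynomial q).contDiff

theorem Function.exists_iterate_succ_eq_sum {R : Type*} [CommSemiring R] {D : R → R} {p : R}
    {N : ℕ} {g : ℕ → R} (hD : D^[N] p = ∑ i ∈ Finset.range N, g i * D^[i] p) :
    ∃ a : Fin N → Fin N → R, ∀ i : Fin N, D (D^[i] p) = ∑ j, a i j * D^[j] p := by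
  -- the companion matrix of the recurrence
  refine ⟨fun i j => if (i : ℕ) + 1 = N then g j else if (j : ℕ) = i + 1 then 1 else 0,
    fun i => ?_⟩
  rw [← Function.iterate_succ_apply' D]
  by_cases hi : (i : ℕ) + 1 = N
  · simp only [hi, if_true, Nat.succ_eq_add_one, hD,
      Fin.sum_univ_eq_sum_range (fun j => g j * D^[j] p)]
  · have hlt : (i : ℕ) + 1 < N := by omega
    rw [Finset.sum_eq_single ⟨(i : ℕ) + 1, hlt⟩] <;> simp +contextual [hi, Fin.ext_iff]

section

variable {n : ℕ}

namespace IsSol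

variable {f : Fin n → MvPolynomial (Fin n) ℝ} {T : ℝ} {φ : ℝ → Fin n → ℝ}

theorem hasDerivWithinAt_eval (hφ : IsSol f T φ) (q : MvPolynomial (Fin n) ℝ) {t : ℝ}
    (ht : t ∈ Icc 0 T) :
    HasDerivWithinAt (fun u => eval (φ u) q) (eval (φ t) (lieD f q)) (Icc 0 T) t := by
  simpa [lieD, map_sum, mul_comm] using (hφ t ht).eval_mvPolynomial q

theorem continuousOn_eval (hφ : IsSol f T φ) (q : MvPolynomial (Fin n) ℝ) :
    ContinuousOn (fun t => eval (φ t) q) (Icc 0 T) :=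
  fun _ ht => (hφ.hasDerivWithinAt_eval q ht).continuousWithinAt

theorem eval_iterate_lieD_eq_zero (hφ : IsSol f T φ) (hT : 0 < T) {p : MvPolynomial (Fin n) ℝ}
    (hp : ∀ t ∈ Icc 0 T, eval (φ t) p = 0) (i : ℕ) :
    ∀ t ∈ Icc 0 T, eval (φ t) ((lieD f)^[i] p) = 0 := by
  induction i with
  | zero => exact hp
  | succ i ih =>
    intro t ht
    rw [Function.iterate_succ_apply']
    exact (uniqueDiffOn_Icc hT t ht).eq_deriv _ (hφ.hasDerivWithinAt_eval _ ht)
      ((hasDerivWithinAt_const t _ 0).congr ih (ih t ht))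

theorem eval_eq_zero_of_lieD_eq_sum {ι : Type*} [Fintype ι] (hφ : IsSol f T φ)
    {q : ι → MvPolynomial (Fin n) ℝ} (a : ι → ι → MvPolynomial (Fin n) ℝ)
    (hq : ∀ i, lieD f (q i) = ∑ j, a i j * q j) (h0 : ∀ i, eval (φ 0) (q i) = 0) :
    ∀ t ∈ Icc 0 T, ∀ i, eval (φ t) (q i) = 0 := by
  set y : ℝ → ι → ℝ := fun t i => eval (φ t) (q i)
  set A : ℝ → ι → ι → ℝ := fun t i j => eval (φ t) (a i j)
  have hy : ∀ t ∈ Icc 0 T,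
      HasDerivWithinAt y (fun i => ∑ j, A t i j * y t j) (Icc 0 T) t := fun t ht =>
    hasDerivWithinAt_pi.2 fun i => by simpa [hq] using hφ.hasDerivWithinAt_eval (q i) ht
  obtain ⟨K, hK⟩ := isCompact_Icc.exists_bound_of_continuousOn
    (f := fun t => ∑ i, ∑ j, |A t i j|) <| continuousOn_finsetSum _ fun i _ =>
      continuousOn_finsetSum _ fun j _ => (hφ.continuousOn_eval (a i j)).abs
  have hy0 := eq_zero_of_abs_deriv_le_mul_abs_self_of_eq_zero_right
    (continuousOn_pi.2 fun i => hφ.continuousOn_eval (q i))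
    (fun t ht =>
      (hy t (Ico_subset_Icc_self ht)).mono_of_mem_nhdsWithin (Icc_mem_nhdsGE_of_mem ht))
    (funext h0)
    (fun t ht => (norm_sum_mul_le (A t) (y t)).trans <| mul_le_mul_of_nonneg_right
      ((le_abs_self _).trans (hK t (Ico_subset_Icc_self ht))) (norm_nonneg _))
  exact fun t ht i => congrFun (hy0 t ht) i

end IsSol

theorem exists_isSol_forall_mem (f : Fin n → MvPolynomial (Fin n) ℝ) {Q : Set (Fin n → ℝ)}
    (hQ : IsOpen Q) {ω : Fin n → ℝ} (hω : ω ∈ Q) :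
    ∃ T > 0, ∃ φ, IsSol f T φ ∧ φ 0 = ω ∧ ∀ t ∈ Icc 0 T, φ t ∈ Q := by
  have hf : ContDiff ℝ 1 fun x i => eval x (f i) := contDiff_pi.2 fun i => (f i).contDiff_eval
  obtain ⟨φ, hφ0, ε, hε, hφ⟩ :=
    (hf.contDiffAt (x := ω)).exists_forall_mem_closedBall_exists_eq_forall_mem_Ioo_hasDerivAt₀ 0
  have h0 : (0 : ℝ) ∈ Ioo (0 - ε) (0 + ε) := by constructor <;> linarith
  have hS : Ioo (0 - ε) (0 + ε) ∩ φ ⁻¹' Q ∈ nhds (0 : ℝ) :=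
    Filter.inter_mem (Ioo_mem_nhds h0.1 h0.2)
      ((hφ 0 h0).continuousAt.preimage_mem_nhds (hQ.mem_nhds (hφ0 ▸ hω)))
  obtain ⟨T, hT, hTS⟩ := nhdsGE_basis_Icc.mem_iff.1 (mem_nhdsWithin_of_mem_nhds hS)
  exact ⟨T, hT, φ, fun t ht => (hφ t (hTS ht).1).hasDerivWithinAt, hφ0,
    fun t ht => (hTS ht).2⟩

end

theorem DRI_char_general {n : ℕ} (f : Fin n → MvPolynomial (Fin n) ℝ)
    (Q : Set (Fin n → ℝ)) (hQ : IsOpen Q) (p : MvPolynomial (Fin n) ℝ)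
    (N : ℕ) (hN : 1 ≤ N) (g : ℕ → MvPolynomial (Fin n) ℝ)
    (hrank : (lieD f)^[N] p = ∑ i ∈ Finset.range N, g i * (lieD f)^[i] p)
    (ω : Fin n → ℝ) :
    (∀ T : ℝ, 0 ≤ T → ∀ φ : ℝ → (Fin n → ℝ), IsSol f T φ → φ 0 = ω →
        (∀ t ∈ Icc (0 : ℝ) T, φ t ∈ Q) → ∀ t ∈ Icc (0 : ℝ) T, eval (φ t) p = 0)
    ↔ (ω ∈ Q → ∀ i < N, eval ω ((lieD f)^[i] p) = 0) := by
  constructor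
  · intro H hω i _
    obtain ⟨T, hT, φ, hφ, hφ0, hφQ⟩ := exists_isSol_forall_mem f hQ hω
    simpa [hφ0] using
      hφ.eval_iterate_lieD_eq_zero hT (H T hT.le φ hφ hφ0 hφQ) i 0 (left_mem_Icc.2 hT.le)
  · intro hL T hT φ hφ hφ0 hφQ t ht
    have hω : ω ∈ Q := hφ0 ▸ hφQ 0 (left_mem_Icc.2 hT)
    obtain ⟨a, ha⟩ := Function.exists_iterate_succ_eq_sum hrank
    exact hφ.eval_eq_zero_of_lieD_eq_sum a ha (fun i => hφ0 ▸ hL hω i i.isLt) t ht ⟨0, hN⟩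

/-- Completeness characterization of algebraic invariants (DRI). -/
theorem DRI_char {n : ℕ} (hn : 1 ≤ n) (f : Fin n → MvPolynomial (Fin n) ℝ)
    (Q : Set (Fin n → ℝ)) (hQ : IsOpen Q) (p : MvPolynomial (Fin n) ℝ)
    (N : ℕ) (hN : 1 ≤ N) (g : ℕ → MvPolynomial (Fin n) ℝ)
    (hrank : (lieD f)^[N] p = ∑ i ∈ Finset.range N, g i * (lieD f)^[i] p)
    (ω : Fin n → ℝ) :
    (∀ T : ℝ, 0 ≤ T → ∀ φ : ℝ → (Fin n → ℝ), IsSol f T φ → φ 0 = ω →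
        (∀ t ∈ Icc (0 : ℝ) T, φ t ∈ Q) → ∀ t ∈ Icc (0 : ℝ) T, eval (φ t) p = 0)
    ↔ (ω ∈ Q → ∀ i < N, eval ω ((lieD f)^[i] p) = 0) :=
  DRI_char_general f Q hQ p N hN g hrank ω
end

section
/- Local progress for strict polynomial inequalities (LP>*): Let f be a polynomial vector field on ℝⁿ and let p be a polynomial with rank N with respect to f. If ω ∈ ℝⁿ satisfies the strict progress predicate Prog>_f(p)(ω), then there exist T > 0 and a solution φ : [0,T] → ℝⁿ of x' = f(x) with φ(0) = ω and p(φ(t)) > 0 for all t ∈ (0,T]. -/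
/-!
The trajectory through `ω` exists by Picard–Lindelöf, since a polynomial vector field is `C¹`.
Along it, `t ↦ L_f^j(p)(φ t)` has derivative `t ↦ L_f^{j+1}(p)(φ t)`. If `k` is the first index
with `L_f^k(p)(ω) ≠ 0`, then `L_f^k(p)(φ t) > 0` on some `[0, T]` by continuity, and descending
from `k` to `0`, each function that vanishes at `0` and has a positive derivative on `(0, T)` is
positive on `(0, T]`.
-/

open MvPolynomial Set

/-- `N` is a rank of `p` with respect to `f`. -/
def IsRank {n : ℕ} (f : Fin n → MvPolynomial (Fin n) ℝ)
    (p : MvPolynomial (Fin n) ℝ) (N : ℕ) : Prop :=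
  1 ≤ N ∧ ∃ g : ℕ → MvPolynomial (Fin n) ℝ,
    (lieD f)^[N] p = ∑ i ∈ Finset.range N, g i * (lieD f)^[i] p

/-- Strict progress predicate: the first significant Lie derivative is positive. -/
def ProgGt {n : ℕ} (f : Fin n → MvPolynomial (Fin n) ℝ)
    (p : MvPolynomial (Fin n) ℝ) (N : ℕ) (ω : Fin n → ℝ) : Prop :=
  ∃ k < N, (∀ j < k, eval ω ((lieD f)^[j] p) = 0) ∧ 0 < eval ω ((lieD f)^[k] p)

/-- Weak progress predicate. -/
def ProgGe {n : ℕ} (f : Fin n → MvPolynomial (Fin n) ℝ)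
    (p : MvPolynomial (Fin n) ℝ) (N : ℕ) (ω : Fin n → ℝ) : Prop :=
  ProgGt f p N ω ∨ ∀ i < N, eval ω ((lieD f)^[i] p) = 0

open Filter Topology

theorem Ioc_pos_of_hasDerivWithinAt_pos {g g' : ℝ → ℝ} {a b : ℝ}
    (hg : ∀ t ∈ Icc a b, HasDerivWithinAt g (g' t) (Icc a b) t) (ha : g a = 0)
    (hg' : ∀ t ∈ Ioo a b, 0 < g' t) : ∀ t ∈ Ioc a b, 0 < g t := by
  have hmono : StrictMonoOn g (Icc a b) := by
    refine strictMonoOn_of_hasDerivWithinAt_pos (f' := g') (convex_Icc a b)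
      (fun t ht => (hg t ht).continuousWithinAt) (fun t ht => ?_) (fun t ht => ?_)
    · rw [interior_Icc] at ht ⊢
      exact (hg t (Ioo_subset_Icc_self ht)).mono Ioo_subset_Icc_self
    · rw [interior_Icc] at ht
      exact hg' t ht
  intro t ht
  rw [← ha]
  exact hmono (left_mem_Icc.mpr (ht.1.le.trans ht.2)) (Ioc_subset_Icc_self ht) ht.1

theorem Ioc_pos_of_iterate_hasDerivWithinAt {g : ℕ → ℝ → ℝ} {a b : ℝ}
    (hg : ∀ j, ∀ t ∈ Icc a b, HasDerivWithinAt (g j) (g (j + 1) t) (Icc a b) t) {k : ℕ}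
    (hzero : ∀ j < k, g j a = 0) (hk : ∀ t ∈ Ioc a b, 0 < g k t) :
    ∀ t ∈ Ioc a b, 0 < g 0 t := by
  induction k generalizing g with
  | zero => exact hk
  | succ k ih =>
    exact Ioc_pos_of_hasDerivWithinAt_pos (hg 0) (hzero 0 k.succ_pos)
      fun t ht => ih (fun j => hg (j + 1)) (fun j hj => hzero (j + 1) (by omega)) hk t
        (Ioo_subset_Ioc_self ht)

theorem contDiff_eval_pi {σ ι : Type*} [Fintype σ] [Fintype ι]
    (f : ι → MvPolynomial σ ℝ) {m : WithTop ℕ∞} :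
    ContDiff ℝ m (fun x : σ → ℝ => fun i => eval x (f i)) :=
  contDiff_pi.mpr fun i => (AnalyticOnNhd.eval_mvPolynomial (f i)).contDiff

theorem hasDerivAt_eval_comp {σ : Type*} [Fintype σ] {α : ℝ → σ → ℝ} {v : σ → ℝ} {t : ℝ}
    (hα : HasDerivAt α v t) (q : MvPolynomial σ ℝ) :
    HasDerivAt (fun u => eval (α u) q) (∑ i, eval (α t) (pderiv i q) * v i) t := by
  classical
  induction q using MvPolynomial.induction_on with
  | C a => simpa using hasDerivAt_const t a
  | add p q hp hq =>
    simp only [map_add, add_mul, Finset.sum_add_distrib]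
    exact hp.add hq
  | mul_X p i hp =>
    simp only [map_mul, eval_X]
    refine (hp.mul (hasDerivAt_pi.mp hα i)).congr_deriv ?_
    simp only [pderiv_mul, pderiv_X, map_add, map_mul, add_mul, Finset.sum_add_distrib,
      Finset.sum_mul]
    simp [Pi.single_apply, mul_right_comm]

theorem hasDerivAt_eval_lieD {n : ℕ} {f : Fin n → MvPolynomial (Fin n) ℝ}
    {α : ℝ → Fin n → ℝ} {t : ℝ} (hα : HasDerivAt α (fun i => eval (α t) (f i)) t)
    (q : MvPolynomial (Fin n) ℝ) :
    HasDerivAt (fun u => eval (α u) q) (eval (α t) (lieD f q)) t := by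
  simpa [lieD] using hasDerivAt_eval_comp hα q

theorem LP_gt_general {n : ℕ} (f : Fin n → MvPolynomial (Fin n) ℝ)
    (p : MvPolynomial (Fin n) ℝ) (N : ℕ)
    (ω : Fin n → ℝ) (hprog : ProgGt f p N ω) :
    ∃ T : ℝ, 0 < T ∧ ∃ φ : ℝ → (Fin n → ℝ), IsSol f T φ ∧ φ 0 = ω ∧
      ∀ t ∈ Ioc (0 : ℝ) T, 0 < eval (φ t) p := by
  obtain ⟨k, -, hzero, hpos⟩ := hprog
  obtain ⟨φ, hφ0, ε, hε, hφ⟩ :=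
    ContDiffAt.exists_forall_mem_closedBall_exists_eq_forall_mem_Ioo_hasDerivAt₀
      (contDiff_eval_pi f).contDiffAt 0
  simp only [zero_sub, zero_add] at hφ
  set g : ℕ → ℝ → ℝ := fun j t => eval (φ t) ((lieD f)^[j] p)
  have hg : ∀ j, ∀ t ∈ Ioo (-ε) ε, HasDerivAt (g j) (g (j + 1) t) t := fun j t ht => by
    simpa only [g, Function.iterate_succ_apply'] using hasDerivAt_eval_lieD (hφ t ht) _
  have h0 : (0 : ℝ) ∈ Ioo (-ε) ε := ⟨neg_lt_zero.mpr hε, hε⟩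
  have hk : ∀ᶠ t in 𝓝 0, 0 < g k t ∧ t ∈ Ioo (-ε) ε :=
    ((hg k 0 h0).continuousAt.eventually (lt_mem_nhds (by simpa [g, hφ0] using hpos))).and
      (Ioo_mem_nhds h0.1 h0.2)
  obtain ⟨T, hT, hTsub⟩ := mem_nhdsGE_iff_exists_Icc_subset.mp (nhdsWithin_le_nhds hk)
  refine ⟨T, hT, φ, fun t ht => (hφ t (hTsub ht).2).hasDerivWithinAt, hφ0, ?_⟩
  refine Ioc_pos_of_iterate_hasDerivWithinAt (g := g)
    (fun j t ht => (hg j t (hTsub ht).2).hasDerivWithinAt) (k := k) ?_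
    (fun t ht => (hTsub (Ioc_subset_Icc_self ht)).1)
  simpa [g, hφ0] using hzero

/-- Local progress for strict polynomial inequalities (LP>*). -/
theorem LP_gt {n : ℕ} (hn : 1 ≤ n) (f : Fin n → MvPolynomial (Fin n) ℝ)
    (p : MvPolynomial (Fin n) ℝ) (N : ℕ) (hN : IsRank f p N)
    (ω : Fin n → ℝ) (hprog : ProgGt f p N ω) :
    ∃ T : ℝ, 0 < T ∧ ∃ φ : ℝ → (Fin n → ℝ), IsSol f T φ ∧ φ 0 = ω ∧
      ∀ t ∈ Ioc (0 : ℝ) T, 0 < eval (φ t) p :=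
  LP_gt_general f p N ω hprog
end
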